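/- Let X be a real Banach space and T : X ⇉ X* a maximal monotone operator. The Fitzpatrick function φ_T, defined by φ_T(x,x*) := sup_{(y,y*) ∈ T} ( ⟨x,y*⟩ + ⟨y,x*⟩ − ⟨y,y*⟩ ), belongs to H(T) and is the smallest element of H(T): for every h ∈ H(T) one has h ≥ φ_T pointwise. -/

import Mathlib

/- Setting: `X` is a real Banach space, `NormedSpace.Dual ℝ X` its topological dual.
A point-to-set operator `T : X ⇉ X*` is identified with its graph,
a subset of `X × NormedSpace.Dual ℝ X`.  Extended-real-valued functions
(`ℝ ∪ {+∞}`) are modelled by `EReal`. -/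

noncomputable section

variable {X : Type*} [NormedAddCommGroup X] [NormedSpace ℝ X]

/-- The duality pairing `⟨x, x*⟩ = x*(x)` of a pair `p = (x, x*)`. -/
def pairingFn (p : X × StrongDual ℝ X) : ℝ := p.2 p.1

/-- Convexity for extended-real-valued functions. -/
def EConvexOn {E : Type*} [AddCommMonoid E] [Module ℝ E] (h : E → EReal) : Prop :=
  ∀ p q : E, ∀ a b : ℝ, 0 ≤ a → 0 ≤ b → a + b = 1 →
    h (a • p + b • q) ≤ (a : EReal) * h p + (b : EReal) * h q

/-- `T` is a monotone operator: `⟨x - y, x* - y*⟩ ≥ 0` on the graph. -/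
def MonotoneOp (T : Set (X × StrongDual ℝ X)) : Prop :=
  ∀ p ∈ T, ∀ q ∈ T, 0 ≤ (p.2 - q.2) (p.1 - q.1)

/-- `T` is maximal monotone. -/
def MaximalMonotoneOp (T : Set (X × StrongDual ℝ X)) : Prop :=
  MonotoneOp T ∧
    ∀ p : X × StrongDual ℝ X, (∀ q ∈ T, 0 ≤ (p.2 - q.2) (p.1 - q.1)) → p ∈ T

/-- The transform `J h (x, x*) = sup_{(y, y*)} ⟨x, y*⟩ + ⟨y, x*⟩ - h (y, y*)`,
i.e. `J h (x, x*) = h* (x*, x)` via the canonical injection `X ↪ X**`. -/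
def JT (h : X × StrongDual ℝ X → EReal) : X × StrongDual ℝ X → EReal :=
  fun p => ⨆ q : X × StrongDual ℝ X, (((q.2 p.1 + p.2 q.1 : ℝ) : EReal) - h q)

/-- The family `H(T)` of convex lower semicontinuous functions on `X × X*`
majorizing the duality product and coinciding with it on `T`. -/
def HT (T : Set (X × StrongDual ℝ X)) : Set (X × StrongDual ℝ X → EReal) :=
  { h | EConvexOn h ∧ LowerSemicontinuous h ∧
      (∀ p : X × StrongDual ℝ X, (pairingFn p : EReal) ≤ h p) ∧
      (∀ p ∈ T, h p = (pairingFn p : EReal)) }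

/-- The subfamily `H_a(T) = { h ∈ H(T) | h ≥ J h }`. -/
def Ha (T : Set (X × StrongDual ℝ X)) : Set (X × StrongDual ℝ X → EReal) :=
  { h | h ∈ HT T ∧ JT h ≤ h }

/-- For `h ∈ H(T)`, the family `L(h) = { g ∈ H(T) | h ≥ g ≥ J g }`. -/
def Lfam (T : Set (X × StrongDual ℝ X)) (h : X × StrongDual ℝ X → EReal) :
    Set (X × StrongDual ℝ X → EReal) :=
  { g | g ∈ HT T ∧ g ≤ h ∧ JT g ≤ g }

/-- The Fenchel–Legendre conjugate `f*(x*) = sup_x ⟨x, x*⟩ - f x`. -/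
def fconj (f : X → EReal) : StrongDual ℝ X → EReal :=
  fun x' => ⨆ x : X, (((x' x : ℝ) : EReal) - f x)

/-- The `ε`-subdifferential:
`∂_ε f (x) = { x* | f y ≥ f x + ⟨y - x, x*⟩ - ε for all y }`. -/
def epsSubdiff (f : X → EReal) (ε : ℝ) (x : X) : Set (StrongDual ℝ X) :=
  { x' | ∀ y : X, f x + ((x' (y - x) - ε : ℝ) : EReal) ≤ f y }

/-- The graph of the subdifferential `∂f = ∂_0 f`. -/
def subdiffGraph (f : X → EReal) : Set (X × StrongDual ℝ X) :=
  { p | p.2 ∈ epsSubdiff f 0 p.1 }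

/-- The `ε`-enlargement `T^ε (x) = { x* | ⟨x - y, x* - y*⟩ ≥ -ε for all (y, y*) ∈ T }`. -/
def enl (T : Set (X × StrongDual ℝ X)) (ε : ℝ) (x : X) :
    Set (StrongDual ℝ X) :=
  { x' | ∀ q ∈ T, -ε ≤ (x' - q.2) (x - q.1) }

/-- The Fitzpatrick function
`φ_T (x, x*) = sup_{(y, y*) ∈ T} ⟨x, y*⟩ + ⟨y, x*⟩ - ⟨y, y*⟩`. -/
def fitz (T : Set (X × StrongDual ℝ X)) : X × StrongDual ℝ X → EReal :=
  fun p => ⨆ q ∈ T, ((q.2 p.1 + p.2 q.1 - q.2 q.1 : ℝ) : EReal)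

/-! `φ_T` is a supremum of continuous affine functions, hence convex and lower semicontinuous.
Its integrand at `q = (y, y*)` equals `⟨x, x*⟩ - ⟨x - y, x* - y*⟩`, so monotonicity of `T`
gives `φ_T ≤ ⟨·,·⟩` on `T`, and maximality gives `⟨·,·⟩ ≤ φ_T` off `T`.
For minimality, take `h ∈ H(T)`, `p = (x, x*)` and `q ∈ T`. Convexity of `h` on the segment
`q + t (p - q)` together with `h ≥ ⟨·,·⟩` and `h q = ⟨q⟩` gives, after dividing by `t`,
`⟨x, y*⟩ + ⟨y, x*⟩ - ⟨y, y*⟩ + O(t) ≤ h p` for `t ∈ (0, 1]`; let `t → 0`. -/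

open Filter Topology

theorem EConvexOn.iSup {E : Type*} {ι : Sort*} [AddCommMonoid E] [Module ℝ E]
    {f : ι → E → EReal} (hf : ∀ i, EConvexOn (f i)) : EConvexOn fun x => ⨆ i, f i x := by
  intro p q a b ha hb hab
  exact iSup_le fun i => (hf i p q a b ha hb hab).trans <| add_le_add
    (mul_le_mul_of_nonneg_left (le_iSup (f · p) i) (EReal.coe_nonneg.2 ha))
    (mul_le_mul_of_nonneg_left (le_iSup (f · q) i) (EReal.coe_nonneg.2 hb))

theorem pairingFn_smul_add_smul (a b : ℝ) (p q : X × StrongDual ℝ X) :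
    pairingFn (a • p + b • q)
      = a ^ 2 * pairingFn p + a * b * (q.2 p.1 + p.2 q.1) + b ^ 2 * pairingFn q := by
  simp only [pairingFn, Prod.fst_add, Prod.snd_add, Prod.smul_fst, Prod.smul_snd, map_add,
    map_smul, add_apply, smul_apply, smul_eq_mul]
  ring

theorem pairingFn_sub_pairingFn_sub (p q : X × StrongDual ℝ X) :
    pairingFn p - pairingFn (p - q) = q.2 p.1 + p.2 q.1 - q.2 q.1 := by
  simp only [pairingFn, Prod.fst_sub, Prod.snd_sub, map_sub, sub_apply]
  ring

theorem le_of_forall_mem_Ioc_add_mul_le {a b r : ℝ}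
    (h : ∀ t ∈ Set.Ioc (0 : ℝ) 1, a + t * b ≤ r) : a ≤ r := by
  have hcont : Continuous fun t : ℝ => a + t * b := by fun_prop
  have hlim : Tendsto (fun t : ℝ => a + t * b) (𝓝[>] 0) (𝓝 a) := by
    simpa using (hcont.tendsto 0).mono_left nhdsWithin_le_nhds
  exact le_of_tendsto hlim (mem_of_superset (Ioc_mem_nhdsGT one_pos) h)

theorem fitz_econvexOn (T : Set (X × StrongDual ℝ X)) : EConvexOn (fitz T) := by
  refine EConvexOn.iSup fun q => EConvexOn.iSup fun _ => ?_
  intro p p' a b _ _ hab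
  refine le_of_eq ?_
  rw [← EReal.coe_mul, ← EReal.coe_mul, ← EReal.coe_add, EReal.coe_eq_coe_iff]
  simp only [Prod.fst_add, Prod.snd_add, Prod.smul_fst, Prod.smul_snd, map_add, map_smul,
    add_apply, smul_apply, smul_eq_mul]
  linear_combination (q.2 q.1) * hab

theorem fitz_lowerSemicontinuous (T : Set (X × StrongDual ℝ X)) :
    LowerSemicontinuous (fitz T) :=
  lowerSemicontinuous_iSup fun _ => lowerSemicontinuous_iSup fun _ =>
    (continuous_coe_real_ereal.comp (by fun_prop)).lowerSemicontinuous

theorem fitz_eq_pairingFn_of_mem {T : Set (X × StrongDual ℝ X)} (hT : MonotoneOp T)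
    {p : X × StrongDual ℝ X} (hp : p ∈ T) : fitz T p = pairingFn p := by
  refine le_antisymm (iSup₂_le fun q hq => ?_) (le_iSup₂_of_le p hp ?_)
  · have hpq : 0 ≤ pairingFn (p - q) := hT p hp q hq
    rw [EReal.coe_le_coe_iff, ← pairingFn_sub_pairingFn_sub]
    linarith
  · rw [EReal.coe_le_coe_iff, ← pairingFn_sub_pairingFn_sub, sub_self]
    simp [pairingFn]

theorem pairingFn_le_fitz {T : Set (X × StrongDual ℝ X)} (hT : MaximalMonotoneOp T)
    (p : X × StrongDual ℝ X) : (pairingFn p : EReal) ≤ fitz T p := by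
  by_cases hp : p ∈ T
  · exact (fitz_eq_pairingFn_of_mem hT.1 hp).ge
  obtain ⟨q, hq, hneg⟩ : ∃ q ∈ T, pairingFn (p - q) < 0 := by
    by_contra! h
    exact hp (hT.2 p h)
  refine le_iSup₂_of_le q hq ?_
  rw [EReal.coe_le_coe_iff, ← pairingFn_sub_pairingFn_sub]
  linarith

theorem fitz_integrand_le_of_econvexOn {h : X × StrongDual ℝ X → EReal} (hconv : EConvexOn h)
    (hge : ∀ p, (pairingFn p : EReal) ≤ h p) {p q : X × StrongDual ℝ X}
    (hq : h q = pairingFn q) {r : ℝ} (hp : h p = r) :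
    q.2 p.1 + p.2 q.1 - q.2 q.1 ≤ r := by
  refine le_of_forall_mem_Ioc_add_mul_le (b := pairingFn p - (q.2 p.1 + p.2 q.1 - q.2 q.1))
    fun t ⟨ht0, ht1⟩ => le_of_mul_le_mul_left ?_ ht0
  have hseg : pairingFn (t • p + (1 - t) • q) ≤ t * r + (1 - t) * pairingFn q := by
    have := (hge _).trans (hconv p q t (1 - t) ht0.le (by linarith) (by ring))
    rw [hp, hq] at this
    exact_mod_cast this
  rw [pairingFn_smul_add_smul] at hseg
  simp only [pairingFn] at hseg ⊢
  linear_combination hseg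

theorem fitz_le_of_econvexOn {T : Set (X × StrongDual ℝ X)} {h : X × StrongDual ℝ X → EReal}
    (hconv : EConvexOn h) (hge : ∀ p, (pairingFn p : EReal) ≤ h p)
    (hT : ∀ p ∈ T, h p = pairingFn p) : fitz T ≤ h := by
  intro p
  induction hp : h p using EReal.rec with
  | bot => exact absurd hp (ne_bot_of_le_ne_bot (EReal.coe_ne_bot _) (hge p))
  | coe r =>
    exact iSup₂_le fun q hq =>
      EReal.coe_le_coe_iff.2 (fitz_integrand_le_of_econvexOn hconv hge (hT q hq) hp)
  | top => exact le_top

theorem fitz_mem_HT_and_smallest_general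
    (T : Set (X × StrongDual ℝ X)) (hT : MaximalMonotoneOp T) :
    fitz T ∈ HT T ∧ ∀ h ∈ HT T, fitz T ≤ h :=
  ⟨⟨fitz_econvexOn T, fitz_lowerSemicontinuous T, pairingFn_le_fitz hT,
      fun _ => fitz_eq_pairingFn_of_mem hT.1⟩,
    fun _ ⟨hconv, _, hge, hT'⟩ => fitz_le_of_econvexOn hconv hge hT'⟩

/-- the Fitzpatrick function `φ_T` belongs to `H(T)` and is its smallest
element. -/
theorem fitz_mem_HT_and_smallest [CompleteSpace X]
    (T : Set (X × StrongDual ℝ X)) (hT : MaximalMonotoneOp T) :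
    fitz T ∈ HT T ∧ ∀ h ∈ HT T, fitz T ≤ h :=
  fitz_mem_HT_and_smallest_general T hT
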